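/- arXiv:2010.12145 — 2 statements merged into one kernel-verified Lean document; each statement's English description precedes it below -/
import Mathlib

section
/- Let n ≥ 1 and let σ ∈ S_n be a permutation with disjoint cycle decomposition σ = σ₁σ₂⋯σ_s where the cycles have lengths l₁,…,l_s. Suppose t : S_n → ℤ/nℤ is a function defined on a subgroup H ≤ S_n containing σ, satisfying t(τρ) = t(τ) + t(ρ) for all τ, ρ ∈ H, and such that t(ρ) = 0 whenever ρ ∈ H fixes some point of {1,…,n}. If gcd(l_i, n) = 1 for some i, then t(σ) = 0. -/
lemma t_pow_aux (n : ℕ) (H : Subgroup (Equiv.Perm (Fin n)))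
    (t : Equiv.Perm (Fin n) → ZMod n)
    (hadd : ∀ τ ρ : Equiv.Perm (Fin n), τ ∈ H → ρ ∈ H → t (τ * ρ) = t τ + t ρ)
    (σ : Equiv.Perm (Fin n)) (hσ : σ ∈ H) :
    ∀ k : ℕ, t (σ ^ (k+1)) = (k+1) • t σ := by
  intro k
  induction k with
  | zero => simp
  | succ m ih =>
    rw [pow_succ, hadd _ _ (pow_mem hσ _) hσ, ih]
    ring

/-- If `σ ∈ H ≤ S_n` has a disjoint cycle decomposition `σ = c₁ ⋯ c_s`, `t` is additive on
`H` with values in `ℤ/nℤ` and vanishes on elements of `H` fixing a point, and some cycle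
length `l_i` is coprime to `n`, then `t σ = 0`. -/
theorem stmt_0 (n : ℕ) (hn : 1 ≤ n) (H : Subgroup (Equiv.Perm (Fin n)))
    (t : Equiv.Perm (Fin n) → ZMod n)
    (hadd : ∀ τ ρ : Equiv.Perm (Fin n), τ ∈ H → ρ ∈ H → t (τ * ρ) = t τ + t ρ)
    (hfix : ∀ ρ ∈ H, (∃ x : Fin n, ρ x = x) → t ρ = 0)
    (σ : Equiv.Perm (Fin n)) (hσ : σ ∈ H)
    (c : List (Equiv.Perm (Fin n))) (hcyc : ∀ τ ∈ c, τ.IsCycle)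
    (hdisj : c.Pairwise Equiv.Perm.Disjoint) (hprod : σ = c.prod)
    (i : Fin c.length) (hgcd : Nat.gcd (c.get i).support.card n = 1) :
    t σ = 0 := by
  classical
  set ci := c.get i with hci
  have hmem : ci ∈ c := by rw [hci]; exact c.get_mem i
  have hcycle : ci.IsCycle := hcyc ci hmem
  set l := ci.support.card with hl
  -- ci is a cycle factor of σ
  have hfac : ci ∈ σ.cycleFactorsFinset := by
    rw [Equiv.Perm.mem_cycleFactorsFinset_iff]
    refine ⟨hcycle, fun a ha => ?_⟩
    rw [hprod]
    exact Equiv.Perm.eq_on_support_mem_disjoint hmem hdisj a ha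
  -- pick a point in the support of ci
  obtain ⟨x, hx⟩ := hcycle.nonempty_support
  have hcyOf : ci = σ.cycleOf x := Equiv.Perm.cycle_is_cycleOf hx hfac
  -- σ ^ l fixes x
  have hfixpt : (σ ^ l) x = x := by
    rw [← Equiv.Perm.cycleOf_pow_apply_self σ x l, ← hcyOf]
    have horder : orderOf ci = l := hcycle.orderOf
    rw [← horder, pow_orderOf_eq_one]
    rfl
  -- l ≥ 1
  have hl1 : 1 ≤ l := Finset.card_pos.mpr ⟨x, hx⟩
  -- t (σ ^ l) = 0
  have h0 : t (σ ^ l) = 0 := hfix _ (pow_mem hσ _) ⟨x, hfixpt⟩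
  -- t (σ ^ l) = l • t σ
  obtain ⟨k, hk⟩ := Nat.exists_eq_add_of_le hl1
  rw [add_comm] at hk
  have hpow := t_pow_aux n H t hadd σ hσ k
  rw [hk, hpow] at h0
  have hgcd' : Nat.gcd (k + 1) n = 1 := by rw [← hk]; exact hgcd
  -- (k+1 : ZMod n) is a unit since gcd (k+1) n = 1
  have hunit : IsUnit ((k + 1 : ℕ) : ZMod n) :=
    (ZMod.isUnit_iff_coprime (k + 1) n).mpr hgcd'
  have : ((k + 1 : ℕ) : ZMod n) * t σ = 0 := by
    rw [← h0, nsmul_eq_mul]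
  exact (hunit.mul_right_eq_zero).mp this
end

section
/- Let p be a prime, and let t_1,…,t_p ∈ ℤ/pℤ. Suppose there exists σ ∈ S_p such that t_j + 1 = t_{σ(j)} for all j. Then the t_j are pairwise distinct, σ is a p-cycle, and σ is the unique permutation in S_p satisfying t_j + 1 = t_{σ(j)} for all j. -/
/-- If `σ ∈ S_p` shifts all the types `t_j ∈ ℤ/pℤ` by `1` (i.e. `t_j + 1 = t_{σ(j)}`),
then the `t_j` are pairwise distinct, `σ` is a `p`-cycle, and `σ` is the unique
permutation with this property. -/
theorem stmt_10 (p : ℕ) (hp : p.Prime) (t : Fin p → ZMod p)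
    (σ : Equiv.Perm (Fin p)) (h : ∀ j, t j + 1 = t (σ j)) :
    Function.Injective t ∧
    σ.IsCycle ∧ σ.support.card = p ∧
    ∀ τ : Equiv.Perm (Fin p), (∀ j, t j + 1 = t (τ j)) → τ = σ := by
  haveI : Fact p.Prime := ⟨hp⟩
  set f : ZMod p → ℕ := fun v => (Finset.univ.filter (fun j => t j = v)).card with hf
  have hstep : ∀ v : ZMod p, f (v + 1) = f v := by
    intro v
    apply Finset.card_bij (fun j _ => σ⁻¹ j)
    · intro j hj
      simp only [Finset.mem_filter, Finset.mem_univ, true_and] at hj ⊢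
      have := h (σ⁻¹ j)
      rw [show σ (σ⁻¹ j) = j from σ.apply_symm_apply j, hj] at this
      have : t (σ⁻¹ j) = v + 1 - 1 := by rw [← this]; ring
      simpa using this
    · intro a ha b hb hab
      exact σ⁻¹.injective hab
    · intro b hb
      refine ⟨σ b, ?_, by simp⟩
      simp only [Finset.mem_filter, Finset.mem_univ, true_and] at hb ⊢
      rw [← h b, hb]
  have hconst : ∀ v : ZMod p, f v = f 0 := by
    have key : ∀ n : ℕ, f (n : ZMod p) = f 0 := by
      intro n
      induction n with
      | zero => simp
      | succ n ih => rw [Nat.cast_succ, hstep, ih]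
    intro v
    obtain ⟨n, rfl⟩ : ∃ n : ℕ, (n : ZMod p) = v := ⟨v.val, ZMod.natCast_rightInverse v⟩
    exact key n
  have hsum : ∑ v : ZMod p, f v = p := by
    rw [← Finset.card_eq_sum_card_fiberwise (f := t) (s := Finset.univ)
      (t := Finset.univ) (fun x _ => Finset.mem_univ _)]
    simp
  have hf0 : f 0 = 1 := by
    have h2 : ∑ v : ZMod p, f v = p * f 0 := by
      rw [Finset.sum_congr rfl (fun v _ => hconst v), Finset.sum_const, smul_eq_mul,
        Finset.card_univ, ZMod.card]
    have h3 : p * f 0 = p := by rw [← h2, hsum]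
    exact Nat.eq_of_mul_eq_mul_left hp.pos (by rw [mul_one]; exact h3)
  have hinj : Function.Injective t := by
    intro i j hij
    have hi : i ∈ Finset.univ.filter (fun k => t k = t j) := by simp [hij]
    have hj : j ∈ Finset.univ.filter (fun k => t k = t j) := by simp
    have hcard : (Finset.univ.filter (fun k => t k = t j)).card ≤ 1 := by
      rw [show (Finset.univ.filter (fun k => t k = t j)).card = f (t j) from rfl,
        hconst, hf0]
    exact Finset.card_le_one.mp hcard i hi j hj
  -- iterate formula
  have hiter : ∀ (k : ℕ) (j : Fin p), t ((σ ^ k) j) = t j + k := by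
    intro k
    induction k with
    | zero => simp
    | succ k ih =>
      intro j
      rw [pow_succ, Equiv.Perm.mul_apply, ih, ← h]
      push_cast
      ring
  have hpow : σ ^ p = 1 := by
    apply Equiv.ext
    intro j
    apply hinj
    rw [hiter p j]
    simp
  have hne : σ ≠ 1 := by
    intro hσ
    have := h 0
    rw [hσ] at this
    simp at this
  have horder : orderOf σ = p := by
    have hdvd : orderOf σ ∣ p := orderOf_dvd_of_pow_eq_one hpow
    rcases (Nat.dvd_prime hp).mp hdvd with h1 | h1
    · exact absurd (orderOf_eq_one_iff.mp h1) hne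
    · exact h1
  have hcycle : σ.IsCycle := by
    apply Equiv.Perm.isCycle_of_prime_order'' (by simpa using hp)
    simpa using horder
  have hsupp : σ.support.card = p := by
    have : σ.support = Finset.univ := by
      ext j
      simp only [Equiv.Perm.mem_support, Finset.mem_univ, iff_true]
      intro hj
      have := h j
      rw [hj] at this
      exact one_ne_zero (add_eq_left.mp this)
    rw [this]
    simp
  refine ⟨hinj, hcycle, hsupp, fun τ hτ => ?_⟩
  apply Equiv.ext
  intro j
  apply hinj
  rw [← hτ j, ← h j]
end
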